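/- Under the same hypotheses, the rigid Horton-Strahler number Rig of an unconditional ξ-Galton-Watson tree is equidistributed with that of the ζ-Galton-Watson tree obtained by suppressing single-child nodes. -/

import Mathlib

open scoped ENNReal

/-- Finite rooted ordered trees. -/
inductive RTree : Type where
  | node : List RTree → RTree

namespace RTree

/-- Number of nodes of a rooted tree. -/
def size : RTree → ℕ
  | node ts => 1 + (ts.attach.map (fun x => size x.1)).sum
decreasing_by simp only [RTree.node.sizeOf_spec]; have := List.sizeOf_lt_of_mem x.2; omega

/-- The (standard) Horton-Strahler number: `0` at leaves; at an internal node, the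
maximum of the children's values, plus one if the maximum is attained at least twice. -/
def HS : RTree → ℕ
  | node ts =>
    let vals := ts.attach.map (fun x => HS x.1)
    let m := vals.foldr max 0
    m + (if 2 ≤ (vals.filter (fun v => v == m)).length then 1 else 0)
decreasing_by simp only [RTree.node.sizeOf_spec]; have := List.sizeOf_lt_of_mem x.2; omega

/-- The French Horton-Strahler number: with children values sorted decreasingly as
`v₁ ≥ v₂ ≥ ⋯ ≥ v_k`, it equals `max_i (v_i + (i-1))`. -/
def Fr : RTree → ℕ
  | node ts =>
    let vals := (ts.attach.map (fun x => Fr x.1)).mergeSort (fun a b => decide (b ≤ a))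
    (vals.zipIdx.map (fun p => p.1 + p.2)).foldr max 0
decreasing_by simp only [RTree.node.sizeOf_spec]; have := List.sizeOf_lt_of_mem x.2; omega

/-- The Canadian Horton-Strahler number: `v₁ + (r - 1)` where `r` is the number of
children attaining the maximal value `v₁`. -/
def Can : RTree → ℕ
  | node ts =>
    let vals := ts.attach.map (fun x => Can x.1)
    let m := vals.foldr max 0
    if vals.length = 0 then 0
    else m + ((vals.filter (fun v => v == m)).length - 1)
decreasing_by simp only [RTree.node.sizeOf_spec]; have := List.sizeOf_lt_of_mem x.2; omega

/-- The rigid Horton-Strahler number: max of children's values, plus one if the node has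
at least two children and all children attain the maximum. -/
def Rig : RTree → ℕ
  | node ts =>
    let vals := ts.attach.map (fun x => Rig x.1)
    let m := vals.foldr max 0
    if vals.length ≤ 1 then m
    else m + (if vals.all (fun v => v == m) then 1 else 0)
decreasing_by simp only [RTree.node.sizeOf_spec]; have := List.sizeOf_lt_of_mem x.2; omega

/-- The `k`-ary register function: with children values sorted decreasingly as
`𝒦₁ ≥ ⋯ ≥ 𝒦_ℓ`, it equals `max {𝒦₁, 𝒦_k + 1}` if `ℓ ≥ k` and `𝒦₁` otherwise. -/
def Kreg (k : ℕ) : RTree → ℕ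
  | node ts =>
    let vals := (ts.attach.map (fun x => Kreg k x.1)).mergeSort (fun a b => decide (b ≤ a))
    if k ≤ vals.length then max (vals.headD 0) (vals.getD (k - 1) 0 + 1)
    else vals.headD 0
decreasing_by simp only [RTree.node.sizeOf_spec]; have := List.sizeOf_lt_of_mem x.2; omega

/-- The Galton-Watson weight of a finite tree: the product over all nodes of the
offspring probability of the node's number of children.  For an offspring distribution
`p` summing to one, `∑' t with property P, gwWeight p t` is the probability that the
(almost surely finite) Galton-Watson tree satisfies `P`. -/
noncomputable def gwWeight (p : ℕ → ℝ≥0∞) : RTree → ℝ≥0∞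
  | node ts => p ts.length * (ts.attach.map (fun x => gwWeight p x.1)).prod
decreasing_by simp only [RTree.node.sizeOf_spec]; have := List.sizeOf_lt_of_mem x.2; omega

/-- The preorder degree sequence of a tree. -/
def degSeq : RTree → List ℕ
  | node ts => ts.length :: (ts.attach.map (fun x => degSeq x.1)).flatten
decreasing_by simp only [RTree.node.sizeOf_spec]; have := List.sizeOf_lt_of_mem x.2; omega

/-- Maximal number of children of any node in the tree. -/
def maxDeg : RTree → ℕ
  | node ts => max ts.length ((ts.attach.map (fun x => maxDeg x.1)).foldr max 0)
decreasing_by simp only [RTree.node.sizeOf_spec]; have := List.sizeOf_lt_of_mem x.2; omega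

/-- `EmbedsCBT h T`: a complete binary tree of height `h` embeds (in the topological
minor sense) into `T`. -/
inductive EmbedsCBT : ℕ → RTree → Prop where
  | zero (t : RTree) : EmbedsCBT 0 t
  | child (h : ℕ) (ts : List RTree) (t : RTree) (ht : t ∈ ts) (he : EmbedsCBT h t) :
      EmbedsCBT h (.node ts)
  | split (h : ℕ) (ts : List RTree) (i j : Fin ts.length) (hij : i ≠ j)
      (hi : EmbedsCBT h ts[i]) (hj : EmbedsCBT h ts[j]) :
      EmbedsCBT (h + 1) (.node ts)

/-- `EmbedsCKT k h T`: a complete `k`-ary tree of height `h` embeds into `T`. -/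
inductive EmbedsCKT (k : ℕ) : ℕ → RTree → Prop where
  | zero (t : RTree) : EmbedsCKT k 0 t
  | child (h : ℕ) (ts : List RTree) (t : RTree) (ht : t ∈ ts) (he : EmbedsCKT k h t) :
      EmbedsCKT k h (.node ts)
  | split (h : ℕ) (ts : List RTree) (s : Finset (Fin ts.length)) (hcard : s.card = k)
      (hall : ∀ i ∈ s, EmbedsCKT k h ts[i]) :
      EmbedsCKT k (h + 1) (.node ts)

end RTree
/-!
Suppressing the nodes with exactly one child sends a tree `t` to a tree `contract t` without
such nodes and does not change `Rig`. The trees contracting to a given tree `s` are obtained by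
stacking, above every node of `s`, a chain of `k ≥ 0` unary nodes; a chain of length `k` has
weight `p₁ᵏ`, so summing over the fiber multiplies the weight `pₙ` of every node of `s` by
`∑ₖ p₁ᵏ = (1 - p₁)⁻¹`. Hence `contract` pushes the `ξ`-Galton-Watson weight forward to the
`ζ`-Galton-Watson weight, and `Rig` has the same law under both.
-/

section ListFiber

variable {α β : Type*} (φ : α → β)

def listMapFiberConsEquiv (b : β) (bs : List β) :
    {a // φ a = b} × {l : List α // l.map φ = bs} ≃ {l : List α // l.map φ = b :: bs} where
  toFun x := ⟨x.1.1 :: x.2.1, by rw [List.map_cons, x.1.2, x.2.2]⟩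
  invFun
    | ⟨a :: l, h⟩ => (⟨a, (List.cons.inj h).1⟩, ⟨l, (List.cons.inj h).2⟩)
  left_inv _ := rfl
  right_inv
    | ⟨_ :: _, _⟩ => rfl

theorem ENNReal.tsum_listMapFiber_prod (w : α → ℝ≥0∞) (v : β → ℝ≥0∞) (bs : List β)
    (h : ∀ b ∈ bs, ∑' a : {a // φ a = b}, w a = v b) :
    ∑' l : {l : List α // l.map φ = bs}, (l.1.map w).prod = (bs.map v).prod := by
  induction bs with
  | nil =>
    have hnil (l : {l : List α // l.map φ = []}) : l = ⟨[], rfl⟩ :=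
      Subtype.ext (List.map_eq_nil_iff.mp l.2)
    rw [tsum_eq_single ⟨[], rfl⟩ fun l hl => (hl (hnil l)).elim]
    rfl
  | cons b bs ih =>
    rw [← (listMapFiberConsEquiv φ b bs).tsum_eq, ENNReal.tsum_prod']
    simp only [listMapFiberConsEquiv, Equiv.coe_fn_mk, List.map_cons, List.prod_cons,
      ENNReal.tsum_mul_left, ENNReal.tsum_mul_right]
    rw [h b List.mem_cons_self, ih fun b hb => h b (List.mem_cons_of_mem _ hb)]

end ListFiber

namespace RTree

@[induction_eliminator]
theorem induction {motive : RTree → Prop}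
    (node : ∀ ts, (∀ t ∈ ts, motive t) → motive (node ts)) (t : RTree) : motive t :=
  match t with
  | .node ts => node ts fun t _ => induction node t
decreasing_by simp only [RTree.node.sizeOf_spec]; have := List.sizeOf_lt_of_mem ‹t ∈ ts›; omega

theorem gwWeight_node (p : ℕ → ℝ≥0∞) (ts : List RTree) :
    gwWeight p (node ts) = p ts.length * (ts.map (gwWeight p)).prod := by
  rw [gwWeight, List.attach_map_val]

theorem Rig_node_congr {ts us : List RTree} (h : ts.map Rig = us.map Rig) :
    Rig (node ts) = Rig (node us) := by
  rw [Rig, Rig, List.attach_map_val, List.attach_map_val, h]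

theorem Rig_node_singleton (t : RTree) : Rig (node [t]) = Rig t := by
  rw [Rig, List.attach_map_val]
  simp

def contract : RTree → RTree
  | node [t] => contract t
  | node ts => node (ts.attach.map fun x => contract x.1)
decreasing_by
  · simp only [RTree.node.sizeOf_spec]; simp; omega
  · simp only [RTree.node.sizeOf_spec]; have := List.sizeOf_lt_of_mem x.2; omega

theorem contract_node_singleton (t : RTree) : contract (node [t]) = contract t := by
  rw [contract]

theorem contract_node {ts : List RTree} (h : ts.length ≠ 1) :
    contract (node ts) = node (ts.map contract) := by
  match ts with
  | [] => rw [contract, List.attach_map_val]; simp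
  | [t] => simp at h
  | a :: b :: r => rw [contract, List.attach_map_val]; simp

theorem Rig_contract (t : RTree) : Rig (contract t) = Rig t := by
  induction t with
  | node ts ih =>
    by_cases h : ts.length = 1
    · obtain ⟨t, rfl⟩ := List.length_eq_one_iff.mp h
      rw [contract_node_singleton, Rig_node_singleton, ih t List.mem_cons_self]
    · rw [contract_node h]
      exact Rig_node_congr (by simpa using List.map_congr_left ih)

def chain : ℕ → RTree → RTree
  | 0, t => t
  | k + 1, t => node [chain k t]

theorem gwWeight_chain (p : ℕ → ℝ≥0∞) (k : ℕ) (t : RTree) :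
    gwWeight p (chain k t) = p 1 ^ k * gwWeight p t := by
  induction k with
  | zero => simp [chain]
  | succ k ih => simp [chain, gwWeight_node, ih, pow_succ', mul_assoc]

theorem contract_chain (k : ℕ) (t : RTree) : contract (chain k t) = contract t := by
  induction k with
  | zero => rfl
  | succ k ih => rw [chain, contract_node_singleton, ih]

/-- `peel t = (k, l)` where `t = chain k (node l)` and `l.length ≠ 1`. -/
def peel : RTree → ℕ × List RTree
  | node [t] => ((peel t).1 + 1, (peel t).2)
  | node ts => (0, ts)
decreasing_by simp only [RTree.node.sizeOf_spec]; simp; omega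

theorem peel_node_singleton (t : RTree) : peel (node [t]) = ((peel t).1 + 1, (peel t).2) := by
  rw [peel]

theorem peel_node {ts : List RTree} (h : ts.length ≠ 1) : peel (node ts) = (0, ts) := by
  match ts with
  | [] => rw [peel]; simp
  | [t] => simp at h
  | a :: b :: r => rw [peel]; simp

theorem induction_peel {motive : RTree → Prop}
    (singleton : ∀ t, motive t → motive (node [t]))
    (node : ∀ ts : List RTree, ts.length ≠ 1 → motive (node ts)) (t : RTree) : motive t := by
  induction t with
  | node ts ih =>
    by_cases h : ts.length = 1
    · obtain ⟨t, rfl⟩ := List.length_eq_one_iff.mp h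
      exact singleton t (ih t List.mem_cons_self)
    · exact node ts h

theorem length_peel_ne_one (t : RTree) : (peel t).2.length ≠ 1 := by
  induction t using induction_peel with
  | singleton t ih => rwa [peel_node_singleton]
  | node ts h => rwa [peel_node h]

theorem chain_peel (t : RTree) : chain (peel t).1 (node (peel t).2) = t := by
  induction t using induction_peel with
  | singleton t ih => rw [peel_node_singleton, chain, ih]
  | node ts h => rw [peel_node h]; rfl

theorem peel_chain (k : ℕ) {l : List RTree} (hl : l.length ≠ 1) :
    peel (chain k (node l)) = (k, l) := by
  induction k with
  | zero => exact peel_node hl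
  | succ k ih => rw [chain, peel_node_singleton, ih]

theorem contract_eq_node_peel (t : RTree) : contract t = node ((peel t).2.map contract) := by
  induction t using induction_peel with
  | singleton t ih => rw [peel_node_singleton, contract_node_singleton, ih]
  | node ts h => rw [peel_node h, contract_node h]

theorem length_ne_one_of_contract_eq {t : RTree} {cs : List RTree} (h : contract t = node cs) :
    cs.length ≠ 1 := by
  rw [contract_eq_node_peel, node.injEq] at h
  rw [← h, List.length_map]
  exact length_peel_ne_one t

def contractFiberEquiv {cs : List RTree} (hcs : cs.length ≠ 1) :
    ℕ × {l : List RTree // l.map contract = cs} ≃ {t : RTree // contract t = node cs} where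
  toFun x := ⟨chain x.1 (node x.2), by
    rw [contract_chain, contract_node (by rwa [← x.2.2, List.length_map] at hcs), x.2.2]⟩
  invFun t := ((peel t.1).1, ⟨(peel t.1).2, by
    simpa only [contract_eq_node_peel, node.injEq] using t.2⟩)
  left_inv x := by
    have hl : x.2.1.length ≠ 1 := by rwa [← x.2.2, List.length_map] at hcs
    simp only [peel_chain x.1 hl]
  right_inv t := Subtype.ext (chain_peel t.1)

/-- The offspring law of `ζ`. -/
noncomputable def condNeOne (p : ℕ → ℝ≥0∞) (i : ℕ) : ℝ≥0∞ :=
  if i = 1 then 0 else p i / (1 - p 1)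

theorem tsum_gwWeight_contract_fiber (p : ℕ → ℝ≥0∞) (s : RTree) :
    ∑' t : {t : RTree // contract t = s}, gwWeight p t = gwWeight (condNeOne p) s := by
  induction s with
  | node cs ih =>
    by_cases hcs : cs.length = 1
    · have : IsEmpty {t : RTree // contract t = node cs} :=
        ⟨fun t => length_ne_one_of_contract_eq t.2 hcs⟩
      simp [gwWeight_node, hcs, condNeOne]
    · rw [← (contractFiberEquiv hcs).tsum_eq, ENNReal.tsum_prod']
      calc ∑' k, ∑' l : {l : List RTree // l.map contract = cs},
            gwWeight p (chain k (node l))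
          = (∑' k, p 1 ^ k) * (p cs.length *
              ∑' l : {l : List RTree // l.map contract = cs}, (l.1.map (gwWeight p)).prod) := by
            simp only [gwWeight_chain, gwWeight_node, ENNReal.tsum_mul_left,
              ENNReal.tsum_mul_right]
            congr 1
            rw [← ENNReal.tsum_mul_left]
            exact tsum_congr fun l => by rw [← List.length_map contract, l.2]
        _ = gwWeight (condNeOne p) (node cs) := by
          rw [ENNReal.tsum_geometric, ENNReal.tsum_listMapFiber_prod contract _ _ cs ih,
            gwWeight_node, condNeOne, if_neg hcs, ENNReal.div_eq_inv_mul, mul_assoc]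

theorem tsum_mul_gwWeight_comp_contract (p : ℕ → ℝ≥0∞) (f : RTree → ℝ≥0∞) :
    ∑' t, f (contract t) * gwWeight p t = ∑' s, f s * gwWeight (condNeOne p) s := by
  rw [← (Equiv.sigmaFiberEquiv contract).tsum_eq, ENNReal.tsum_sigma']
  refine tsum_congr fun s => ?_
  rw [← tsum_gwWeight_contract_fiber, ← ENNReal.tsum_mul_left]
  refine tsum_congr fun t => ?_
  rw [Equiv.sigmaFiberEquiv_apply, t.2]

end RTree

theorem rig_remove_p1_general (p : ℕ → ℝ≥0∞) :
    ∀ x : ℕ,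
      (∑' t : RTree, if RTree.Rig t = x then RTree.gwWeight p t else 0) =
      ∑' t : RTree, if RTree.Rig t = x then
          RTree.gwWeight (fun i => if i = 1 then 0 else p i / (1 - p 1)) t
        else 0 := by
  intro x
  have h := RTree.tsum_mul_gwWeight_comp_contract p fun s => if RTree.Rig s = x then 1 else 0
  simp only [RTree.Rig_contract, ite_mul, one_mul, zero_mul] at h
  exact h

/-- Removing the probability of having exactly one child (and rescaling)
does not change the distribution of the rigid Horton-Strahler number of an unconditional
critical Galton-Watson tree with variance in `(0, ∞)`. -/
theorem rig_remove_p1 (p : ℕ → ℝ≥0∞) (hsum : ∑' i : ℕ, p i = 1)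
    (hmean : ∑' i : ℕ, (i : ℝ≥0∞) * p i = 1)
    (hvarpos : 1 < ∑' i : ℕ, (i : ℝ≥0∞) ^ 2 * p i)
    (hvarfin : ∑' i : ℕ, (i : ℝ≥0∞) ^ 2 * p i < ⊤)
    (hp1 : p 1 < 1) :
    ∀ x : ℕ,
      (∑' t : RTree, if RTree.Rig t = x then RTree.gwWeight p t else 0) =
      ∑' t : RTree, if RTree.Rig t = x then
          RTree.gwWeight (fun i => if i = 1 then 0 else p i / (1 - p 1)) t
        else 0 :=
  rig_remove_p1_general p
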